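/- With C = (Y × [0,1])/∼ the cone over a Cantor set, J, K fans in C with K ⊆ J, fences H_J = Cl(q⁻¹(J \ {v})) and H_K = Cl(q⁻¹(K \ {v})): if r : J → K is a retraction and there exists a retraction R : H_J → H_K with q(R(x)) = r(q(x)) for all x ∈ H_J, then r is semi-simple, i.e., for each leg A of J there is a leg B of J with r(A) ⊆ B. -/

import Mathlib

open Set Topology Filter

section Defs
variable {X : Type*} [TopologicalSpace X]

def IsSubcontinuum (A : Set X) : Prop := IsCompact A ∧ IsConnected A

def IsArc (A : Set X) : Prop := Nonempty (A ≃ₜ (Set.Icc (0:ℝ) 1))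

def IsEndpointOfArc (A : Set X) (x : X) : Prop :=
  ∃ φ : (Set.Icc (0:ℝ) 1) ≃ₜ A, ((φ ⟨0, by norm_num⟩ : A) : X) = x

def IsArcFromTo (A : Set X) (x y : X) : Prop :=
  (x = y ∧ A = {x}) ∨ (x ≠ y ∧ IsArc A ∧ IsEndpointOfArc A x ∧ IsEndpointOfArc A y)

def IsArcwiseConnected (K : Set X) : Prop :=
  ∀ x ∈ K, ∀ y ∈ K, x ≠ y →
    ∃ A, A ⊆ K ∧ IsArc A ∧ IsEndpointOfArc A x ∧ IsEndpointOfArc A y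

def IsUnicoherent (K : Set X) : Prop :=
  ∀ A B : Set X, IsSubcontinuum A → IsSubcontinuum B → A ∪ B = K → IsConnected (A ∩ B)

def IsDendroid (K : Set X) : Prop :=
  IsSubcontinuum K ∧ IsArcwiseConnected K ∧
    ∀ A, A ⊆ K → IsSubcontinuum A → IsUnicoherent A

def triodModel : Set (ℝ × ℝ) := (Set.Icc (-1) 1 ×ˢ ({0} : Set ℝ)) ∪ (({0} : Set ℝ) ×ˢ Set.Icc 0 1)

lemma triod_top_mem : ((0, 0) : ℝ × ℝ) ∈ triodModel := by
  left; exact ⟨by norm_num, rfl⟩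

def IsSimpleTriodWithTop (T : Set X) (x : X) : Prop :=
  ∃ φ : triodModel ≃ₜ T, ((φ ⟨(0, 0), triod_top_mem⟩ : T) : X) = x

def IsRamificationPoint (K : Set X) (x : X) : Prop :=
  x ∈ K ∧ ∃ T, T ⊆ K ∧ IsSimpleTriodWithTop T x

def IsEndpoint (K : Set X) (x : X) : Prop :=
  x ∈ K ∧ ∀ A, A ⊆ K → IsArc A → x ∈ A → IsEndpointOfArc A x

def IsFan (K : Set X) : Prop :=
  IsDendroid K ∧ ∀ x y, IsRamificationPoint K x → IsRamificationPoint K y → x = y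

def IsFanWithTop (K : Set X) (v : X) : Prop := IsFan K ∧ IsRamificationPoint K v

def Legs (K : Set X) (v : X) : Set (Set X) :=
  {A | ∃ e, IsEndpoint K e ∧ A ⊆ K ∧ IsArcFromTo A v e}

def IsRetractOf (B A : Set X) : Prop :=
  ∃ r : X → X, ContinuousOn r A ∧ Set.MapsTo r A B ∧ Set.EqOn r id B

end Defs

section MetricDefs
variable {X : Type*} [MetricSpace X]

def IsSmoothFan (K : Set X) (v : X) : Prop :=
  IsFanWithTop K v ∧
  ∀ x ∈ K, ∀ xs : ℕ → X, (∀ n, xs n ∈ K) → Tendsto xs atTop (nhds x) →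
    ∀ A : Set X, A ⊆ K → IsArcFromTo A v x →
    ∀ As : ℕ → Set X, (∀ n, As n ⊆ K ∧ IsArcFromTo (As n) v (xs n)) →
      Tendsto (fun n => Metric.hausdorffDist (As n) A) atTop (nhds 0)

def IsLelekFan (K : Set X) (v : X) : Prop :=
  IsSmoothFan K v ∧ K ⊆ closure {x | IsEndpoint K x}

def IsWedge (L : Set X) (v : X) (W : Set X) : Prop :=
  W ⊆ L ∧ IsSubcontinuum W ∧ IsLelekFan W v ∧ IsLelekFan ((L \ W) ∪ {v}) v

end MetricDefs

def coneSetoid (Z : Type*) : Setoid (Z × Set.Icc (0:ℝ) 1) where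
  r a b := a = b ∨ ((a.2 : ℝ) = 0 ∧ (b.2 : ℝ) = 0)
  iseqv := by
    refine ⟨fun a => Or.inl rfl, ?_, ?_⟩
    · rintro a b (rfl | h)
      · exact Or.inl rfl
      · exact Or.inr ⟨h.2, h.1⟩
    · rintro a b c (rfl | h) (rfl | h')
      · exact Or.inl rfl
      · exact Or.inr h'
      · exact Or.inr h
      · exact Or.inr ⟨h.1, h'.2⟩

abbrev CantorFanSpace : Type := Quotient (coneSetoid (ℕ → Bool))

def IsCantorFan {X : Type*} [TopologicalSpace X] (K : Set X) (v : X) : Prop :=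
  IsFanWithTop K v ∧ Nonempty (K ≃ₜ CantorFanSpace)

def IsConfluent {X Y : Type*} [TopologicalSpace X] [TopologicalSpace Y] (f : X → Y) : Prop :=
  ∀ Q : Set Y, Q ⊆ Set.range f → IsCompact Q → IsConnected Q →
    ∀ x ∈ f ⁻¹' Q, f '' connectedComponentIn (f ⁻¹' Q) x = Q

/-- The fence `F = Y × [0,1]` over the Cantor set `Y = ℕ → Bool`. -/
abbrev Fence : Type := (ℕ → Bool) × Set.Icc (0:ℝ) 1

/-- The quotient map `q : F → C` onto the Cantor fan `C = F/∼`. -/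
def q : Fence → CantorFanSpace := Quotient.mk (coneSetoid (ℕ → Bool))

/-- The top `v` of the Cantor fan `C`. -/
def vtop : CantorFanSpace := q ((fun _ => false), ⟨0, by norm_num⟩)

/-- The fence `F_K = q⁻¹(K)` of a subset `K` of the Cantor fan. -/
def FFence (K : Set CantorFanSpace) : Set Fence := q ⁻¹' K

/-- The fence `H_K = Cl_F(q⁻¹(K \ {v}))` of a subset `K` of the Cantor fan. -/
def HFence (K : Set CantorFanSpace) : Set Fence := closure (q ⁻¹' (K \ {vtop}))

/-!
Away from the top, a leg `A` of `J` lies in a single spoke, so `A \ {v}` lifts to a connected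
subset of the fence `H_J`. Its image under `R` is connected, hence lies over a single point `y` of
the (totally disconnected) Cantor set, and `q ∘ R = r ∘ q` puts `r(A)` into the spoke over `y`.
The fan `J` meets that spoke in an initial segment from `v` up to its highest point, and this
segment is a leg of `J`: were its tip an interior point of an arc in `J`, then near that point the
arc would stay in the spoke, where the height is injective, so the height along the arc would be
an injective continuous function of a real parameter with an interior maximum.
-/

namespace CantorFan

noncomputable def height : CantorFanSpace → ℝ :=
  Quotient.lift (fun p : Fence => (p.2 : ℝ)) (by
    rintro a b (rfl | ⟨ha, hb⟩)
    · rfl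
    · exact ha.trans hb.symm)

-- The value at the top `vtop` is arbitrary; `base` is only continuous away from it.
noncomputable def base : CantorFanSpace → ℕ → Bool :=
  Quotient.lift (fun p : Fence => if (p.2 : ℝ) = 0 then fun _ => false else p.1) (by
    rintro a b (rfl | ⟨ha, hb⟩)
    · rfl
    · simp only [ha, hb, if_true])

-- Clamped to `[0,1]`, so that `pt y` is continuous on all of `ℝ`.
noncomputable def pt (y : ℕ → Bool) (u : ℝ) : CantorFanSpace :=
  q (y, projIcc 0 1 zero_le_one u)

def spoke (y : ℕ → Bool) : Set CantorFanSpace := pt y '' Icc 0 1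

lemma height_q (p : Fence) : height (q p) = p.2 := rfl

lemma base_q (p : Fence) : base (q p) = if (p.2 : ℝ) = 0 then fun _ => false else p.1 := rfl

lemma continuous_height : Continuous height :=
  Continuous.quotient_lift (continuous_subtype_val.comp continuous_snd) _

lemma continuous_pt (y : ℕ → Bool) : Continuous (pt y) :=
  continuous_quot_mk.comp (continuous_const.prodMk continuous_projIcc)

lemma height_mem (z : CantorFanSpace) : height z ∈ Icc (0 : ℝ) 1 :=
  Quotient.inductionOn z fun p => p.2.2

lemma height_pt (y : ℕ → Bool) {u : ℝ} (hu : u ∈ Icc (0 : ℝ) 1) : height (pt y u) = u := by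
  simp only [pt, height_q, projIcc_of_mem _ hu]

lemma base_pt (y : ℕ → Bool) {u : ℝ} (hu : u ∈ Ioc (0 : ℝ) 1) : base (pt y u) = y := by
  simp only [pt, base_q, projIcc_of_mem _ (Ioc_subset_Icc_self hu), hu.1.ne', if_false]

lemma pt_zero (y : ℕ → Bool) : pt y 0 = vtop :=
  Quotient.sound (Or.inr ⟨by simp, rfl⟩)

lemma pt_base_height (z : CantorFanSpace) : pt (base z) (height z) = z := by
  induction z using Quotient.inductionOn with
  | h p =>
    change pt (base (q p)) (height (q p)) = q p
    by_cases hp : (p.2 : ℝ) = 0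
    · rw [height_q, hp, pt_zero]
      exact Quotient.sound (Or.inr ⟨rfl, hp⟩)
    · simp only [pt, base_q, height_q, hp, if_false, projIcc_val]

lemma height_eq_zero {z : CantorFanSpace} : height z = 0 ↔ z = vtop :=
  ⟨fun h => by rw [← pt_base_height z, h, pt_zero], fun h => h ▸ rfl⟩

lemma q_eq_vtop {p : Fence} : q p = vtop ↔ (p.2 : ℝ) = 0 := by
  rw [← height_eq_zero, height_q]

lemma mem_spoke_iff {y : ℕ → Bool} {z : CantorFanSpace} : z ∈ spoke y ↔ z = vtop ∨ base z = y := by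
  constructor
  · rintro ⟨u, hu, rfl⟩
    rcases hu.1.eq_or_lt with rfl | hu0
    · exact Or.inl (pt_zero y)
    · exact Or.inr (base_pt y ⟨hu0, hu.2⟩)
  · rintro (rfl | rfl)
    · exact ⟨0, left_mem_Icc.2 zero_le_one, pt_zero y⟩
    · exact ⟨height z, height_mem z, pt_base_height z⟩

lemma vtop_mem_spoke (y : ℕ → Bool) : vtop ∈ spoke y := mem_spoke_iff.2 (Or.inl rfl)

lemma q_mem_spoke (p : Fence) : q p ∈ spoke p.1 := ⟨p.2, p.2.2, by simp only [pt, projIcc_val]⟩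

lemma isClosed_spoke (y : ℕ → Bool) : IsClosed (spoke y) := by
  have hpre : q ⁻¹' spoke y = {p : Fence | (p.2 : ℝ) = 0 ∨ p.1 = y} := by
    ext p
    rw [mem_preimage, mem_spoke_iff, q_eq_vtop, base_q, mem_ofPred_eq]
    by_cases hp : (p.2 : ℝ) = 0 <;> simp [hp]
  rw [← isQuotientMap_quotient_mk'.isClosed_preimage]
  change IsClosed (q ⁻¹' spoke y)
  rw [hpre]
  exact (isClosed_eq (by fun_prop) continuous_const).union
    (isClosed_eq continuous_fst continuous_const)

lemma isOpen_compl_vtop : IsOpen ({vtop}ᶜ : Set CantorFanSpace) := by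
  have : ({vtop}ᶜ : Set CantorFanSpace) = height ⁻¹' {0}ᶜ := by
    ext z; simp [height_eq_zero]
  rw [this]
  exact isOpen_compl_singleton.preimage continuous_height

lemma continuousOn_base : ContinuousOn base {vtop}ᶜ := by
  refine (continuousOn_open_iff isOpen_compl_vtop).2 fun t ht => ?_
  rw [← isQuotientMap_quotient_mk'.isOpen_preimage]
  change IsOpen (q ⁻¹' ({vtop}ᶜ ∩ base ⁻¹' t))
  have hpre : q ⁻¹' ({vtop}ᶜ ∩ base ⁻¹' t) = {p : Fence | (p.2 : ℝ) ≠ 0} ∩ Prod.fst ⁻¹' t := by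
    ext p
    rw [mem_preimage, mem_inter_iff, mem_compl_singleton_iff, ne_eq, q_eq_vtop, mem_preimage,
      base_q]
    by_cases hp : (p.2 : ℝ) = 0 <;>
      simp only [hp, if_true, if_false, mem_inter_iff, mem_ofPred_eq, mem_preimage,
        not_true_eq_false, not_false_eq_true, false_and, true_and, ne_eq]
  rw [hpre]
  exact (isOpen_compl_singleton.preimage (by fun_prop)).inter (ht.preimage continuous_fst)

lemma _root_.IsPreconnected.base_eq {Z : Set CantorFanSpace} (hZ : IsPreconnected Z)
    (hv : vtop ∉ Z) {z z' : CantorFanSpace} (hz : z ∈ Z) (hz' : z' ∈ Z) : base z = base z' :=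
  (hZ.image base (continuousOn_base.mono fun _ hx h => hv (h ▸ hx))).subsingleton
    (mem_image_of_mem _ hz) (mem_image_of_mem _ hz')

lemma _root_.IsPreconnected.exists_image_q_subset_spoke {S : Set Fence} (hS : IsPreconnected S) :
    ∃ y, q '' S ⊆ spoke y := by
  rcases S.eq_empty_or_nonempty with rfl | ⟨p, hp⟩
  · exact ⟨fun _ => false, by simp⟩
  · refine ⟨p.1, ?_⟩
    rintro _ ⟨x, hx, rfl⟩
    have hx1 : x.1 = p.1 := (hS.image _ continuous_fst.continuousOn).subsingleton
      (mem_image_of_mem _ hx) (mem_image_of_mem _ hp)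
    exact hx1 ▸ q_mem_spoke x

end CantorFan

section Arc

variable {X : Type*} [TopologicalSpace X] {A : Set X} {x y : X}

lemma IsArc.isPreconnected (hA : IsArc A) : IsPreconnected A := by
  obtain ⟨ψ⟩ := hA
  have hrange : range (fun t => (ψ.symm t : X)) = A := by
    ext a
    refine ⟨fun ⟨t, ht⟩ => ht ▸ (ψ.symm t).2, fun ha => ⟨ψ ⟨a, ha⟩, by simp⟩⟩
  exact hrange ▸ isPreconnected_range (continuous_subtype_val.comp ψ.symm.continuous)

lemma IsEndpointOfArc.mem (h : IsEndpointOfArc A x) : x ∈ A := by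
  obtain ⟨φ, rfl⟩ := h
  exact (φ _).2

lemma isEndpointOfArc_of_apply_one (φ : unitInterval ≃ₜ A) (h : (φ 1 : X) = x) :
    IsEndpointOfArc A x :=
  ⟨unitInterval.symmHomeomorph.trans φ, by simpa using h⟩

lemma IsArcFromTo.left_mem (h : IsArcFromTo A x y) : x ∈ A := by
  rcases h with ⟨-, rfl⟩ | ⟨-, -, hx, -⟩
  · rfl
  · exact hx.mem

lemma IsEndpointOfArc.isPreconnected_diff (h : IsEndpointOfArc A x) :
    IsPreconnected (A \ {x}) := by
  obtain ⟨φ, rfl⟩ := h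
  change IsPreconnected (A \ {(φ 0 : X)})
  set γ : ℝ → X := IccExtend zero_le_one fun t => (φ t : X)
  have hγ : A \ {(φ 0 : X)} = γ '' Ioc 0 1 := by
    ext a
    constructor
    · rintro ⟨ha, ha0⟩
      set t := φ.symm ⟨a, ha⟩
      have ht0 : (t : ℝ) ≠ 0 := fun h0 => ha0 (by
        have hφt : φ t = ⟨a, ha⟩ := φ.apply_symm_apply _
        rw [show t = 0 from Subtype.ext h0] at hφt
        rw [hφt, mem_singleton_iff])
      refine ⟨t, ⟨lt_of_le_of_ne t.2.1 (Ne.symm ht0), t.2.2⟩, ?_⟩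
      simp [γ, IccExtend_of_mem _ _ t.2, t]
    · rintro ⟨u, hu, rfl⟩
      simp only [γ, IccExtend_of_mem _ _ (Ioc_subset_Icc_self hu)]
      refine ⟨(φ _).2, fun h => hu.1.ne' ?_⟩
      exact congrArg Subtype.val (φ.injective (Subtype.ext h))
  rw [hγ]
  exact isPreconnected_Ioc.image _
    (continuous_subtype_val.comp φ.continuous).Icc_extend'.continuousOn

lemma IsArcFromTo.isPreconnected_diff_left (h : IsArcFromTo A x y) :
    IsPreconnected (A \ {x}) := by
  rcases h with ⟨-, rfl⟩ | ⟨-, -, hx, -⟩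
  · rw [sdiff_self]
    exact isPreconnected_empty
  · exact hx.isPreconnected_diff

end Arc

lemma ContinuousOn.not_isMaxOn_of_injOn {f : ℝ → ℝ} {a b c : ℝ} (hf : ContinuousOn f (Icc a b))
    (hinj : InjOn f (Icc a b)) (hc : c ∈ Ioo a b) : ¬ IsMaxOn f (Icc a b) c := by
  intro hmax
  have hcI : c ∈ Icc a b := Ioo_subset_Icc_self hc
  rcases hf.strictMonoOn_of_injOn_Icc' (hc.1.trans hc.2).le hinj with hmono | hanti
  · exact (hmono hcI (right_mem_Icc.2 (hc.1.trans hc.2).le) hc.2).not_ge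
      (hmax (right_mem_Icc.2 (hc.1.trans hc.2).le))
  · exact (hanti (left_mem_Icc.2 (hc.1.trans hc.2).le) hcI hc.1).not_ge
      (hmax (left_mem_Icc.2 (hc.1.trans hc.2).le))

namespace CantorFan

lemma pt_ne_vtop (y : ℕ → Bool) {s : ℝ} (hs : s ∈ Ioc (0 : ℝ) 1) : pt y s ≠ vtop := by
  intro h
  have h0 := height_pt y (Ioc_subset_Icc_self hs)
  rw [h, height_eq_zero.2 rfl] at h0
  exact hs.1.ne h0

lemma pt_image_subset_of_isArcwiseConnected {J : Set CantorFanSpace} (hJ : IsArcwiseConnected J)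
    (hvJ : vtop ∈ J) {y : ℕ → Bool} {s : ℝ} (hs : s ∈ Ioc (0 : ℝ) 1) (hsJ : pt y s ∈ J) :
    pt y '' Icc 0 s ⊆ J := by
  obtain ⟨Z, hZJ, hZ, hv, he⟩ := hJ _ hvJ _ hsJ (pt_ne_vtop y hs).symm
  have hbase : ∀ z ∈ Z \ {vtop}, base z = y := fun z hz =>
    (hv.isPreconnected_diff.base_eq (fun h => h.2 rfl) hz ⟨he.mem, pt_ne_vtop y hs⟩).trans
      (base_pt y hs)
  have hheight : Icc 0 s ⊆ height '' Z :=
    (hZ.isPreconnected.image _ continuous_height.continuousOn).Icc_subset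
      ⟨vtop, hv.mem, height_eq_zero.2 rfl⟩ ⟨pt y s, he.mem, height_pt y (Ioc_subset_Icc_self hs)⟩
  rintro _ ⟨u, hu, rfl⟩
  obtain ⟨z, hz, rfl⟩ := hheight hu
  by_cases hzv : z = vtop
  · rwa [hzv, height_eq_zero.2 rfl, pt_zero]
  · rw [← hbase z ⟨hz, hzv⟩, pt_base_height]
    exact hZJ hz

lemma isArcFromTo_pt_image (y : ℕ → Bool) {s : ℝ} (hs : s ∈ Ioc (0 : ℝ) 1) :
    IsArcFromTo (pt y '' Icc 0 s) vtop (pt y s) := by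
  set ξ : unitInterval → CantorFanSpace := fun t => pt y (s * t)
  have hξ : IsEmbedding ξ := by
    refine Function.LeftInverse.isEmbedding (f := fun z => projIcc 0 1 zero_le_one (height z / s))
      (fun t => ?_) (continuous_projIcc.comp (continuous_height.div_const s))
      ((continuous_pt y).comp (continuous_const.mul continuous_subtype_val))
    have hst : s * t ∈ Icc (0 : ℝ) 1 := unitInterval.mul_mem (Ioc_subset_Icc_self hs) t.2
    simp only [ξ, height_pt y hst, mul_div_cancel_left₀ _ hs.1.ne', projIcc_val]
  have hrange : range ξ = pt y '' Icc 0 s := by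
    rw [show ξ = pt y ∘ (s * ·) ∘ Subtype.val from rfl, range_comp, range_comp,
      Subtype.range_coe, image_mul_left_Icc hs.1.le zero_le_one, mul_zero, mul_one]
  set φ := hξ.toHomeomorph.trans (Homeomorph.setCongr hrange)
  have hφ : ∀ t, (φ t : CantorFanSpace) = pt y (s * t) := fun _ => rfl
  refine Or.inr ⟨(pt_ne_vtop y hs).symm, ⟨φ.symm⟩, ⟨φ, ?_⟩, isEndpointOfArc_of_apply_one φ ?_⟩
  · change (φ 0 : CantorFanSpace) = vtop
    rw [hφ, Set.Icc.coe_zero, mul_zero, pt_zero]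
  · rw [hφ, Set.Icc.coe_one, mul_one]

lemma ne_pt_of_forall_height_le {J : Set CantorFanSpace} {y : ℕ → Bool} {s : ℝ}
    (hs : s ∈ Ioc (0 : ℝ) 1) (hmax : ∀ z ∈ J ∩ spoke y, height z ≤ s) {γ : ℝ → CantorFanSpace}
    (hγ : Continuous γ) (hγinj : InjOn γ (Icc 0 1)) (hγJ : MapsTo γ (Icc 0 1) J) {c : ℝ}
    (hc : c ∈ Ioo 0 1) : γ c ≠ pt y s := by
  intro hγc
  have hnhds : {t | γ t ≠ vtop} ∩ Ioo 0 1 ∈ 𝓝 c :=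
    inter_mem ((isOpen_compl_vtop.preimage hγ).mem_nhds (by simp [hγc, pt_ne_vtop y hs]))
      (isOpen_Ioo.mem_nhds hc)
  obtain ⟨a, b, ⟨hac, hcb⟩, hab⟩ := mem_nhds_iff_exists_Ioo_subset.1 hnhds
  set I := Icc ((a + c) / 2) ((c + b) / 2)
  have hI : ∀ t ∈ I, γ t ≠ vtop ∧ t ∈ Icc (0 : ℝ) 1 := fun t ht =>
    have htab : t ∈ Ioo a b := ⟨by linarith [ht.1], by linarith [ht.2]⟩
    ⟨(hab htab).1, Ioo_subset_Icc_self (hab htab).2⟩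
  have hcI' : c ∈ Ioo ((a + c) / 2) ((c + b) / 2) := ⟨by linarith, by linarith⟩
  have hcI : c ∈ I := Ioo_subset_Icc_self hcI'
  have hbase : ∀ t ∈ I, base (γ t) = y := fun t ht =>
    ((isPreconnected_Icc.image γ hγ.continuousOn).base_eq (fun ⟨t', ht', h⟩ => (hI t' ht').1 h)
      (mem_image_of_mem γ ht) (mem_image_of_mem γ hcI)).trans (hγc ▸ base_pt y hs)
  have hinj : InjOn (height ∘ γ) I := by
    intro t ht t' ht' h
    refine hγinj (hI t ht).2 (hI t' ht').2 ?_
    rw [← pt_base_height (γ t), ← pt_base_height (γ t'), hbase t ht, hbase t' ht']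
    exact congrArg (pt y) h
  refine (continuous_height.comp hγ).continuousOn.not_isMaxOn_of_injOn hinj hcI' fun t ht => ?_
  simpa [hγc, height_pt y (Ioc_subset_Icc_self hs)] using
    hmax (γ t) ⟨hγJ (hI t ht).2, mem_spoke_iff.2 (Or.inr (hbase t ht))⟩

lemma isEndpoint_pt_of_forall_height_le {J : Set CantorFanSpace} {y : ℕ → Bool} {s : ℝ}
    (hs : s ∈ Ioc (0 : ℝ) 1) (hsJ : pt y s ∈ J) (hmax : ∀ z ∈ J ∩ spoke y, height z ≤ s) :
    IsEndpoint J (pt y s) := by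
  refine ⟨hsJ, fun D hDJ ⟨ψ⟩ heD => ?_⟩
  set c := ψ ⟨_, heD⟩
  have hc : (ψ.symm c : CantorFanSpace) = pt y s := by simp [c]
  by_cases hc0 : c = 0
  · exact ⟨ψ.symm, by rw [← hc, hc0]; rfl⟩
  by_cases hc1 : c = 1
  · exact isEndpointOfArc_of_apply_one ψ.symm (hc1 ▸ hc)
  set γ : ℝ → CantorFanSpace := IccExtend zero_le_one fun t => (ψ.symm t : CantorFanSpace)
  have hγinj : InjOn γ (Icc 0 1) := fun t ht t' ht' h => by
    simp only [γ, IccExtend_of_mem _ _ ht, IccExtend_of_mem _ _ ht'] at h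
    exact congrArg Subtype.val (ψ.symm.injective (Subtype.ext h))
  have hγJ : MapsTo γ (Icc 0 1) J := fun t ht => by
    simp only [γ, IccExtend_of_mem _ _ ht]
    exact hDJ (Subtype.prop _)
  have hγc : γ c = pt y s := by simp only [γ, IccExtend_val, hc]
  exact absurd hγc (ne_pt_of_forall_height_le hs hmax
    (continuous_subtype_val.comp ψ.symm.continuous).Icc_extend' hγinj hγJ
    ⟨c.2.1.lt_of_ne (unitInterval.coe_ne_zero.2 hc0).symm,
      c.2.2.lt_of_ne (unitInterval.coe_ne_one.2 hc1)⟩)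


lemma exists_mem_legs_inter_spoke_subset {J : Set CantorFanSpace} (hJc : IsCompact J)
    (hJ : IsArcwiseConnected J) (hvJ : vtop ∈ J) {A : Set CantorFanSpace} (hA : A ∈ Legs J vtop)
    (y : ℕ → Bool) : ∃ B ∈ Legs J vtop, J ∩ spoke y ⊆ B := by
  obtain ⟨e, ⟨heJ, u, hu, rfl⟩, hmax⟩ := (hJc.inter_right (isClosed_spoke y)).exists_isMaxOn
    ⟨vtop, hvJ, vtop_mem_spoke y⟩ continuous_height.continuousOn
  replace hmax : ∀ z ∈ J ∩ spoke y, height z ≤ u := fun z hz => height_pt y hu ▸ hmax hz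
  have hle : ∀ z ∈ J ∩ spoke y, ∃ w ∈ Icc 0 u, z = pt y w := by
    rintro z hz
    obtain ⟨w, hw, rfl⟩ := hz.2
    exact ⟨w, ⟨hw.1, height_pt y hw ▸ hmax _ hz⟩, rfl⟩
  rcases hu.1.eq_or_lt with rfl | hu0
  · have ⟨_, _, _, hAe⟩ := hA
    refine ⟨A, hA, fun z hz => ?_⟩
    obtain ⟨w, hw, rfl⟩ := hle z hz
    rw [le_antisymm hw.2 hw.1, pt_zero]
    exact hAe.left_mem
  · have hu' : u ∈ Ioc (0 : ℝ) 1 := ⟨hu0, hu.2⟩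
    refine ⟨pt y '' Icc 0 u, ⟨pt y u, isEndpoint_pt_of_forall_height_le hu' heJ hmax,
      pt_image_subset_of_isArcwiseConnected hJ hvJ hu' heJ, isArcFromTo_pt_image y hu'⟩, ?_⟩
    rintro z hz
    obtain ⟨w, hw, rfl⟩ := hle z hz
    exact mem_image_of_mem _ hw

lemma exists_image_subset_spoke_of_lift {J A : Set CantorFanSpace} (hAJ : A ⊆ J)
    (hA : IsPreconnected (A \ {vtop})) {r : CantorFanSpace → CantorFanSpace} (hrv : r vtop = vtop)
    {R : Fence → Fence} (hR : ContinuousOn R (HFence J))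
    (hcomm : ∀ x ∈ HFence J, q (R x) = r (q x)) : ∃ y, r '' A ⊆ spoke y := by
  set lift : CantorFanSpace → Fence := fun a => (base a, projIcc 0 1 zero_le_one (height a))
  have hq : ∀ a, q (lift a) = a := pt_base_height
  have hL : lift '' (A \ {vtop}) ⊆ HFence J := by
    rintro _ ⟨a, ha, rfl⟩
    exact subset_closure (show q (lift a) ∈ J \ {vtop} from (hq a).symm ▸ ⟨hAJ ha.1, ha.2⟩)
  have hLconn : IsPreconnected (lift '' (A \ {vtop})) :=
    hA.image _ ((continuousOn_base.prodMk
      (continuous_projIcc.comp continuous_height).continuousOn).mono fun _ ha => ha.2)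
  obtain ⟨y, hy⟩ := (hLconn.image R (hR.mono hL)).exists_image_q_subset_spoke
  refine ⟨y, ?_⟩
  rintro _ ⟨a, ha, rfl⟩
  by_cases hav : a = vtop
  · rw [hav, hrv]
    exact vtop_mem_spoke y
  · have haL : lift a ∈ lift '' (A \ {vtop}) := mem_image_of_mem _ ⟨ha, hav⟩
    rw [← hq a, ← hcomm _ (hL haL)]
    exact hy (mem_image_of_mem _ (mem_image_of_mem _ haL))

end CantorFan

theorem stmt18_general (J K : Set CantorFanSpace)
    (hJ : IsFanWithTop J vtop) (hK : IsFanWithTop K vtop) (hKJ : K ⊆ J)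
    (r : CantorFanSpace → CantorFanSpace)
    (hm : Set.MapsTo r J K) (hid : Set.EqOn r id K)
    (R : Fence → Fence) (hR : ContinuousOn R (HFence J))
    (hcomm : ∀ x ∈ HFence J, q (R x) = r (q x)) :
    ∀ A ∈ Legs J vtop, ∃ B ∈ Legs J vtop, r '' A ⊆ B := by
  intro A hA
  have ⟨_, _, hAJ, hvA⟩ := hA
  obtain ⟨y, hy⟩ := CantorFan.exists_image_subset_spoke_of_lift hAJ hvA.isPreconnected_diff_left
    (hid hK.2.1) hR hcomm
  obtain ⟨B, hB, hJB⟩ :=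
    CantorFan.exists_mem_legs_inter_spoke_subset hJ.1.1.1.1 hJ.1.1.2.1 hJ.2.1 hA y
  exact ⟨B, hB, (subset_inter ((image_mono hAJ).trans (hm.image_subset.trans hKJ)) hy).trans hJB⟩

/-- if a retraction `r : J → K` between fans in the Cantor fan lifts to
a retraction `R : H_J → H_K` of the fences (`q ∘ R = r ∘ q` on `H_J`), then `r` is
semi-simple: each leg of `J` is mapped into a single leg of `J`. -/
theorem stmt18 (J K : Set CantorFanSpace)
    (hJ : IsFanWithTop J vtop) (hK : IsFanWithTop K vtop) (hKJ : K ⊆ J)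
    (r : CantorFanSpace → CantorFanSpace)
    (hr : ContinuousOn r J) (hm : Set.MapsTo r J K) (hid : Set.EqOn r id K)
    (R : Fence → Fence) (hR : ContinuousOn R (HFence J))
    (hRm : Set.MapsTo R (HFence J) (HFence K)) (hRid : Set.EqOn R id (HFence K))
    (hcomm : ∀ x ∈ HFence J, q (R x) = r (q x)) :
    ∀ A ∈ Legs J vtop, ∃ B ∈ Legs J vtop, r '' A ⊆ B :=
  stmt18_general J K hJ hK hKJ r hm hid R hR hcomm
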